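/- arXiv:1608.04260 — 3 statements merged into one kernel-verified Lean document; each statement's English description precedes it below -/
import Mathlib

section
/- Let Π be a nonempty set (of policies) and for each π ∈ Π let a_π, c_π : ℕ → ℝ be bounded sequences (the per-slot expected reward and per-slot expected static-user rate under π). Define J(π) = liminf_{N→∞} (1/N) Σ_{τ=1}^{N} a_π(τ), C(π) = liminf_{N→∞} (1/N) Σ_{τ=1}^{N} c_π(τ), and for ξ ≥ 0 the Lagrangian value L_ξ(π) = liminf_{N→∞} (1/N) Σ_{τ=1}^{N} (a_π(τ) + ξ c_π(τ)). Suppose there exist ξ* ≥ 0 and π* ∈ Π such that (i) L_{ξ*}(π*) ≥ L_{ξ*}(π) for all π ∈ Π (π* is optimal for the unconstrained Lagrangian problem with multiplier ξ*), (ii) the Cesàro averages (1/N) Σ_{τ=1}^{N} a_{π*}(τ) and (1/N) Σ_{τ=1}^{N} c_{π*}(τ) converge as N → ∞, and (iii) the constraint is met with equality under π*, i.e. C(π*) = R₀. Then π* is optimal for the constrained problem: for every π ∈ Π with C(π) ≥ R₀ one has J(π) ≤ J(π*). -/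
/-!
Because `ξ ≥ 0`, the liminf of the Lagrangian averages of any policy `π` dominates
`J π + ξ C π`, while for `πs`, whose reward averages converge, it equals
`J πs + ξ C πs = J πs + ξ R₀`. Optimality of `πs` for the Lagrangian gives
`J π + ξ C π ≤ J πs + ξ R₀`, and `C π ≥ R₀` then yields `J π ≤ J πs`.
-/

open Filter Topology

noncomputable def cesaroMean (x : ℕ → ℝ) (N : ℕ) : ℝ :=
  (∑ τ ∈ Finset.Icc 1 N, x τ) / N

lemma cesaroMean_add_const_mul (x y : ℕ → ℝ) (ξ : ℝ) (N : ℕ) :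
    cesaroMean (fun n => x n + ξ * y n) N = cesaroMean x N + ξ * cesaroMean y N := by
  simp only [cesaroMean, Finset.sum_add_distrib, ← Finset.mul_sum]
  ring

lemma abs_cesaroMean_le {x : ℕ → ℝ} {M : ℝ} (hM : ∀ n, |x n| ≤ M) (N : ℕ) :
    |cesaroMean x N| ≤ M := by
  rcases N.eq_zero_or_pos with rfl | hN
  · simpa [cesaroMean] using (abs_nonneg _).trans (hM 0)
  · have hN : (0 : ℝ) < N := by exact_mod_cast hN
    rw [cesaroMean, abs_div, abs_of_pos hN, div_le_iff₀ hN]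
    calc |∑ τ ∈ Finset.Icc 1 N, x τ| ≤ ∑ τ ∈ Finset.Icc 1 N, |x τ| :=
          Finset.abs_sum_le_sum_abs _ _
      _ ≤ ∑ _τ ∈ Finset.Icc 1 N, M := Finset.sum_le_sum fun τ _ => hM τ
      _ = M * N := by simp [mul_comm]

lemma isBoundedUnder_cesaroMean {x : ℕ → ℝ} (hx : ∃ M, ∀ n, |x n| ≤ M) (l : Filter ℕ) :
    IsBoundedUnder (· ≤ ·) l (cesaroMean x) ∧ IsBoundedUnder (· ≥ ·) l (cesaroMean x) :=
  let ⟨M, hM⟩ := hx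
  isBoundedUnder_le_abs.mp (isBoundedUnder_of ⟨M, abs_cesaroMean_le hM⟩)

section LiminfAddConstMul

variable {ι : Type*} {f : Filter ι} [f.NeBot] {u v : ι → ℝ} {ξ : ℝ}

lemma liminf_const_mul_of_nonneg (hξ : 0 ≤ ξ) (hv : IsBoundedUnder (· ≤ ·) f v)
    (hv' : IsBoundedUnder (· ≥ ·) f v) :
    liminf (fun i => ξ * v i) f = ξ * liminf v f :=
  ((monotone_mul_left_of_nonneg hξ).map_liminf_of_continuousAt v
    (continuous_const_mul ξ).continuousAt hv.isCoboundedUnder_ge hv').symm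

lemma le_liminf_add_const_mul (hξ : 0 ≤ ξ) (hu : IsBoundedUnder (· ≤ ·) f u)
    (hu' : IsBoundedUnder (· ≥ ·) f u) (hv : IsBoundedUnder (· ≤ ·) f v)
    (hv' : IsBoundedUnder (· ≥ ·) f v) :
    liminf u f + ξ * liminf v f ≤ liminf (fun i => u i + ξ * v i) f := by
  rw [← liminf_const_mul_of_nonneg hξ hv hv']
  exact le_liminf_add hu' hu ((monotone_mul_left_of_nonneg hξ).isBoundedUnder_ge_comp hv')
    ((monotone_mul_left_of_nonneg hξ).isBoundedUnder_le_comp hv).isCoboundedUnder_ge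

lemma Filter.Tendsto.liminf_add_const_mul {l : ℝ} (hu : Tendsto u f (𝓝 l)) (hξ : 0 ≤ ξ)
    (hv : IsBoundedUnder (· ≤ ·) f v) (hv' : IsBoundedUnder (· ≥ ·) f v) :
    liminf (fun i => u i + ξ * v i) f = l + ξ * liminf v f := by
  refine le_antisymm ?_ (hu.liminf_eq ▸ le_liminf_add_const_mul hξ
    hu.isBoundedUnder_le hu.isBoundedUnder_ge hv hv')
  rw [← hu.limsup_eq, ← liminf_const_mul_of_nonneg hξ hv hv']
  exact liminf_add_le hu.isBoundedUnder_ge hu.isBoundedUnder_le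
    ((monotone_mul_left_of_nonneg hξ).isBoundedUnder_ge_comp hv')
    ((monotone_mul_left_of_nonneg hξ).isBoundedUnder_le_comp hv).isCoboundedUnder_ge

end LiminfAddConstMul

theorem lagrange_sufficiency_general
    {P : Type*}
    (a c : P → ℕ → ℝ)
    (ha_bdd : ∀ π : P, ∃ M : ℝ, ∀ n : ℕ, |a π n| ≤ M)
    (hc_bdd : ∀ π : P, ∃ M : ℝ, ∀ n : ℕ, |c π n| ≤ M)
    (ξ R₀ : ℝ) (hξ : 0 ≤ ξ)
    (J C L : P → ℝ)
    (hJ : ∀ π : P, J π =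
      Filter.liminf (fun N : ℕ => (∑ τ ∈ Finset.Icc 1 N, a π τ) / N) Filter.atTop)
    (hC : ∀ π : P, C π =
      Filter.liminf (fun N : ℕ => (∑ τ ∈ Finset.Icc 1 N, c π τ) / N) Filter.atTop)
    (hL : ∀ π : P, L π =
      Filter.liminf (fun N : ℕ => (∑ τ ∈ Finset.Icc 1 N, (a π τ + ξ * c π τ)) / N)
        Filter.atTop)
    (πs : P)
    (hopt : ∀ π : P, L π ≤ L πs)
    (hconv_a : ∃ la : ℝ, Filter.Tendsto
      (fun N : ℕ => (∑ τ ∈ Finset.Icc 1 N, a πs τ) / N) Filter.atTop (nhds la))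
    (heq : C πs = R₀) :
    ∀ π : P, R₀ ≤ C π → J π ≤ J πs := by
  have hL' : ∀ π, L π = liminf (fun N => cesaroMean (a π) N + ξ * cesaroMean (c π) N) atTop :=
    fun π => by simp only [hL, ← cesaroMean_add_const_mul]; rfl
  intro π hCπ
  obtain ⟨la, hla⟩ := hconv_a
  obtain ⟨haπ, haπ'⟩ := isBoundedUnder_cesaroMean (ha_bdd π) atTop
  obtain ⟨hcπ, hcπ'⟩ := isBoundedUnder_cesaroMean (hc_bdd π) atTop
  obtain ⟨hcs, hcs'⟩ := isBoundedUnder_cesaroMean (hc_bdd πs) atTop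
  have hLπ : J π + ξ * C π ≤ L π := by
    rw [hJ, hC, hL']
    exact le_liminf_add_const_mul hξ haπ haπ' hcπ hcπ'
  have hLs : L πs = J πs + ξ * R₀ := by
    rw [hL', hJ, ← heq, hC, hla.liminf_eq]
    exact hla.liminf_add_const_mul hξ hcs hcs'
  have hpenalty : ξ * R₀ ≤ ξ * C π := mul_le_mul_of_nonneg_left hCπ hξ
  linarith [hopt π]

/-- Lagrange-multiplier sufficiency for the constrained time-average problem
(Theorem 1 of the paper): if a policy `πs` is optimal for the unconstrained
Lagrangian problem with multiplier `ξ ≥ 0`, its Cesàro averages converge, and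
it meets the constraint with equality, then it is optimal for the constrained
problem. -/
theorem lagrange_sufficiency
    {P : Type*} [Nonempty P]
    (a c : P → ℕ → ℝ)
    (ha_bdd : ∀ π : P, ∃ M : ℝ, ∀ n : ℕ, |a π n| ≤ M)
    (hc_bdd : ∀ π : P, ∃ M : ℝ, ∀ n : ℕ, |c π n| ≤ M)
    (ξ R₀ : ℝ) (hξ : 0 ≤ ξ)
    (J C L : P → ℝ)
    (hJ : ∀ π : P, J π =
      Filter.liminf (fun N : ℕ => (∑ τ ∈ Finset.Icc 1 N, a π τ) / N) Filter.atTop)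
    (hC : ∀ π : P, C π =
      Filter.liminf (fun N : ℕ => (∑ τ ∈ Finset.Icc 1 N, c π τ) / N) Filter.atTop)
    (hL : ∀ π : P, L π =
      Filter.liminf (fun N : ℕ => (∑ τ ∈ Finset.Icc 1 N, (a π τ + ξ * c π τ)) / N)
        Filter.atTop)
    (πs : P)
    (hopt : ∀ π : P, L π ≤ L πs)
    (hconv_a : ∃ la : ℝ, Filter.Tendsto
      (fun N : ℕ => (∑ τ ∈ Finset.Icc 1 N, a πs τ) / N) Filter.atTop (nhds la))
    (hconv_c : ∃ lc : ℝ, Filter.Tendsto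
      (fun N : ℕ => (∑ τ ∈ Finset.Icc 1 N, c πs τ) / N) Filter.atTop (nhds lc))
    (heq : C πs = R₀) :
    ∀ π : P, R₀ ≤ C π → J π ≤ J πs :=
  lagrange_sufficiency_general a c ha_bdd hc_bdd ξ R₀ hξ J C L hJ hC hL πs hopt hconv_a heq
end

section
/- Let S be a finite nonempty set, g : S → ℝ with g(s) > 0 for all s and Σ_{s∈S} g(s) = 1, let A, B : S → ℝ with A(s) > 0 and B(s) > 0 for all s, and fix α ∈ (0,1). For ξ > 0 define η*(ξ, s) = (ξ·B(s))^{1/(α−1)} / ( (ξ·B(s))^{1/(α−1)} + A(s)^{1/(α−1)} ) (real powers; 1/(α−1) < 0), and define R̄*(ξ) = Σ_{s∈S} g(s)·B(s)·(1 − η*(ξ, s))^α. Then R̄* is strictly increasing and continuous on (0,∞). -/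
/-!
With `p = 1/(α-1) < 0`, the static share is `1 - η*(ξ,s) = A(s)^p / ((ξ B(s))^p + A(s)^p)`.
Since `ξ ↦ (ξ B(s))^p` is strictly decreasing and positive on `(0,∞)`, each share is strictly
increasing and continuous there with values in `(0,1)`; raising it to the power `α > 0` and
weighting by `g(s) B(s) > 0` preserves both properties, and so does summing over the
nonempty set `S`.
-/

open Real Set Finset

theorem strictMonoOn_finset_sum {ι α M : Type*} [Preorder α] [AddCommMonoid M] [PartialOrder M]
    [IsOrderedCancelAddMonoid M] {s : Finset ι} (hs : s.Nonempty) {f : ι → α → M} {t : Set α}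
    (hf : ∀ i ∈ s, StrictMonoOn (f i) t) : StrictMonoOn (fun x => ∑ i ∈ s, f i x) t :=
  fun _ hx _ hy hxy => sum_lt_sum_of_nonempty hs fun i hi => hf i hi hx hy hxy

section Share

variable {p b c : ℝ}

theorem one_sub_div_add_self {x y : ℝ} (h : x + y ≠ 0) : 1 - x / (x + y) = y / (x + y) := by
  rw [one_sub_div h, add_sub_cancel_left]

theorem div_rpow_mul_add_pos (hb : 0 < b) (hc : 0 < c) {ξ : ℝ} (hξ : 0 < ξ) :
    0 < c / ((ξ * b) ^ p + c) :=
  div_pos hc (add_pos (rpow_pos_of_pos (mul_pos hξ hb) p) hc)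

theorem strictMonoOn_div_rpow_mul_add (hp : p < 0) (hb : 0 < b) (hc : 0 < c) :
    StrictMonoOn (fun ξ => c / ((ξ * b) ^ p + c)) (Ioi 0) := by
  intro x hx y hy hxy
  have hpow : (y * b) ^ p < (x * b) ^ p :=
    rpow_lt_rpow_of_neg (mul_pos hx hb) (mul_lt_mul_of_pos_right hxy hb) hp
  exact div_lt_div_of_pos_left hc (add_pos (rpow_pos_of_pos (mul_pos hy hb) p) hc)
    (add_lt_add_left hpow c)

theorem continuousOn_div_rpow_mul_add (hb : 0 < b) (hc : 0 < c) :
    ContinuousOn (fun ξ => c / ((ξ * b) ^ p + c)) (Ioi 0) := by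
  refine continuousOn_const.div ?_ fun ξ hξ => (add_pos (rpow_pos_of_pos (mul_pos hξ hb) p) hc).ne'
  refine ((continuousOn_id.mul continuousOn_const).rpow_const ?_).add continuousOn_const
  exact fun ξ hξ => Or.inl (mul_pos hξ hb).ne'

end Share

theorem static_alpha_utility_strict_mono_continuous_general
    {S : Type*} [Fintype S] [Nonempty S]
    (g A B : S → ℝ)
    (hg : ∀ s : S, 0 < g s)
    (hA : ∀ s : S, 0 < A s) (hB : ∀ s : S, 0 < B s)
    (α : ℝ) (hα : α ∈ Set.Ioo (0 : ℝ) 1)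
    (η : ℝ → S → ℝ)
    (hη : ∀ ξ : ℝ, 0 < ξ → ∀ s : S,
      η ξ s = (ξ * B s) ^ (1 / (α - 1)) /
        ((ξ * B s) ^ (1 / (α - 1)) + (A s) ^ (1 / (α - 1))))
    (Rbar : ℝ → ℝ)
    (hR : ∀ ξ : ℝ, Rbar ξ = ∑ s : S, g s * B s * (1 - η ξ s) ^ α) :
    StrictMonoOn Rbar (Set.Ioi (0 : ℝ)) ∧ ContinuousOn Rbar (Set.Ioi (0 : ℝ)) := by
  obtain ⟨hα0, hα1⟩ := hα
  set p := 1 / (α - 1)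
  have hp : p < 0 := one_div_neg.2 (by linarith)
  have hAp : ∀ s, 0 < A s ^ p := fun s => rpow_pos_of_pos (hA s) p
  let share (s : S) (ξ : ℝ) : ℝ := A s ^ p / ((ξ * B s) ^ p + A s ^ p)
  have hRbar : EqOn Rbar (fun ξ => ∑ s, g s * B s * share s ξ ^ α) (Ioi 0) := fun ξ hξ => by
    refine (hR ξ).trans (sum_congr rfl fun s _ => ?_)
    rw [hη ξ hξ s, one_sub_div_add_self
      (add_pos (rpow_pos_of_pos (mul_pos hξ (hB s)) p) (hAp s)).ne']
  refine ⟨(strictMonoOn_finset_sum univ_nonempty fun s _ => ?_).congr hRbar.symm,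
    (continuousOn_finsetSum _ fun s _ => ?_).congr hRbar⟩
  · have hshare := strictMonoOn_div_rpow_mul_add hp (hB s) (hAp s)
    intro x hx y hy hxy
    refine mul_lt_mul_of_pos_left ?_ (mul_pos (hg s) (hB s))
    exact rpow_lt_rpow (div_rpow_mul_add_pos (hB s) (hAp s) hx).le (hshare hx hy hxy) hα0
  · exact continuousOn_const.mul
      ((continuousOn_div_rpow_mul_add (hB s) (hAp s)).rpow_const fun _ _ => Or.inr hα0.le)

/-- The long-run average α-fair static-user utility
`R̄*(ξ) = Σ_s g(s)·B(s)·(1 − η*(ξ,s))^α` is strictly increasing and continuous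
on `(0,∞)` (consequence of Lemma 3 used in Section V). -/
theorem static_alpha_utility_strict_mono_continuous
    {S : Type*} [Fintype S] [Nonempty S]
    (g A B : S → ℝ)
    (hg : ∀ s : S, 0 < g s) (hsum : ∑ s : S, g s = 1)
    (hA : ∀ s : S, 0 < A s) (hB : ∀ s : S, 0 < B s)
    (α : ℝ) (hα : α ∈ Set.Ioo (0 : ℝ) 1)
    (η : ℝ → S → ℝ)
    (hη : ∀ ξ : ℝ, 0 < ξ → ∀ s : S,
      η ξ s = (ξ * B s) ^ (1 / (α - 1)) /
        ((ξ * B s) ^ (1 / (α - 1)) + (A s) ^ (1 / (α - 1))))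
    (Rbar : ℝ → ℝ)
    (hR : ∀ ξ : ℝ, Rbar ξ = ∑ s : S, g s * B s * (1 - η ξ s) ^ α) :
    StrictMonoOn Rbar (Set.Ioi (0 : ℝ)) ∧ ContinuousOn Rbar (Set.Ioi (0 : ℝ)) :=
  static_alpha_utility_strict_mono_continuous_general g A B hg hA hB α hα η hη Rbar hR
end

section
/- Let S be a finite nonempty set, g : S → ℝ with g(s) > 0 for all s and Σ_{s∈S} g(s) = 1, let A, B : S → ℝ with A(s) > 0 and B(s) > 0 for all s, and fix α ∈ (0,1). For ξ > 0 define η*(ξ, s) = (ξ·B(s))^{1/(α−1)} / ( (ξ·B(s))^{1/(α−1)} + A(s)^{1/(α−1)} ) (real powers; 1/(α−1) < 0), and define R̄*(ξ) = Σ_{s∈S} g(s)·B(s)·(1 − η*(ξ, s))^α. Then R̄*(ξ) → 0 as ξ → 0+ and R̄*(ξ) → Σ_{s∈S} g(s)·B(s) as ξ → ∞; consequently, for every R₀ with 0 < R₀ < Σ_{s∈S} g(s)·B(s), there exists a unique ξ* > 0 such that R̄*(ξ*) = R₀. -/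
/-!
With `p = 1/(α-1) < 0`, the static share is `1 - η*(ξ, s) = A^p / ((ξB)^p + A^p)`. Since
`ξ ↦ (ξB)^p` decreases from `+∞` to `0`, each share increases continuously from `0` to `1`,
so `R̄*` is a continuous, strictly increasing function of `ξ > 0` running from `0` to
`Σ g B`; the multiplier is then given by the intermediate value theorem and is unique by
strict monotonicity.
-/

open Filter Set Topology

theorem existsUnique_pos_eq_of_strictMonoOn_Ioi {f : ℝ → ℝ} {a b c : ℝ}
    (hmono : StrictMonoOn f (Ioi 0)) (hcont : ContinuousOn f (Ioi 0))
    (h0 : Tendsto f (𝓝[>] 0) (𝓝 a)) (htop : Tendsto f atTop (𝓝 b))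
    (hac : a < c) (hcb : c < b) : ∃! x, 0 < x ∧ f x = c := by
  obtain ⟨x₀, hx₀c, hx₀⟩ :=
    ((h0.eventually_lt_const hac).and self_mem_nhdsWithin).exists
  obtain ⟨x₁, hx₀₁, hcx₁⟩ :=
    ((eventually_gt_atTop x₀).and (htop.eventually_const_lt hcb)).exists
  have hx₁ : x₁ ∈ Ioi (0 : ℝ) := lt_trans hx₀ hx₀₁
  obtain ⟨x, hx, hfx⟩ := hcont.surjOn_Icc hx₀ hx₁ ⟨hx₀c.le, hcx₁.le⟩
  exact ⟨x, ⟨hx, hfx⟩, fun y ⟨hy, hfy⟩ => hmono.injOn hy hx (hfy.trans hfx.symm)⟩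

/-- The static users' fraction of bandwidth `1 - η*(ξ, s)` at a state with `A s = a`,
`B s = b`, where `p = 1/(α-1)`. -/
noncomputable def staticShare (p a b ξ : ℝ) : ℝ := a ^ p / ((ξ * b) ^ p + a ^ p)

section staticShare

variable {p a b : ℝ}

lemma staticShare_denom_pos (ha : 0 < a) (hb : 0 < b) {ξ : ℝ} (hξ : 0 < ξ) :
    0 < (ξ * b) ^ p + a ^ p := by
  positivity

lemma staticShare_pos (ha : 0 < a) (hb : 0 < b) {ξ : ℝ} (hξ : 0 < ξ) :
    0 < staticShare p a b ξ :=
  div_pos (Real.rpow_pos_of_pos ha p) (staticShare_denom_pos ha hb hξ)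

lemma strictMonoOn_staticShare (ha : 0 < a) (hb : 0 < b) (hp : p < 0) :
    StrictMonoOn (staticShare p a b) (Ioi 0) := by
  intro x hx y hy hxy
  have hpow : (y * b) ^ p < (x * b) ^ p :=
    Real.rpow_lt_rpow_of_neg (mul_pos hx hb) (mul_lt_mul_of_pos_right hxy hb) hp
  exact div_lt_div_of_pos_left (Real.rpow_pos_of_pos ha p) (staticShare_denom_pos ha hb hy)
    (by linarith)

lemma continuousOn_staticShare (ha : 0 < a) (hb : 0 < b) :
    ContinuousOn (staticShare p a b) (Ioi 0) := by
  refine continuousOn_const.div ?_ fun ξ hξ => (staticShare_denom_pos ha hb hξ).ne'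
  refine ContinuousOn.add ?_ continuousOn_const
  exact (continuousOn_id.mul continuousOn_const).rpow_const fun _ hξ =>
    Or.inl (mul_pos hξ hb).ne'

lemma tendsto_staticShare_nhdsGT_zero (hb : 0 < b) (hp : p < 0) :
    Tendsto (staticShare p a b) (𝓝[>] 0) (𝓝 0) := by
  have hpow : Tendsto (fun ξ : ℝ => (ξ * b) ^ p) (𝓝[>] 0) atTop := by
    refine (tendsto_rpow_neg_nhdsGT_zero hp).comp ?_
    simpa using TendstoNhdsWithinIoi.mul_const hb (tendsto_id (x := 𝓝[>] (0 : ℝ)))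
  exact tendsto_const_nhds.div_atTop (hpow.atTop_add tendsto_const_nhds)

lemma tendsto_staticShare_atTop (ha : 0 < a) (hb : 0 < b) (hp : p < 0) :
    Tendsto (staticShare p a b) atTop (𝓝 1) := by
  have hpow : Tendsto (fun ξ : ℝ => (ξ * b) ^ p) atTop (𝓝 0) := by
    simpa [Function.comp_def] using (tendsto_rpow_neg_atTop (neg_pos.mpr hp)).comp
      (tendsto_id.atTop_mul_const hb)
  have hap : a ^ p ≠ 0 := (Real.rpow_pos_of_pos ha p).ne'
  have h := (tendsto_const_nhds (x := a ^ p)).div (hpow.add_const (a ^ p)) (by rwa [zero_add])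
  rwa [zero_add, div_self hap] at h

end staticShare

/-- `R̄*(ξ)` with weights `w s = g s * B s`. -/
noncomputable def staticUtility {S : Type*} [Fintype S] (p α : ℝ) (w a b : S → ℝ) (ξ : ℝ) : ℝ :=
  ∑ s, w s * staticShare p (a s) (b s) ξ ^ α

section staticUtility

variable {S : Type*} [Fintype S] {p α : ℝ} {w a b : S → ℝ}

lemma strictMonoOn_staticUtility [Nonempty S] (hw : ∀ s, 0 < w s) (ha : ∀ s, 0 < a s)
    (hb : ∀ s, 0 < b s) (hp : p < 0) (hα : 0 < α) :
    StrictMonoOn (staticUtility p α w a b) (Ioi 0) := by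
  intro x hx y hy hxy
  refine Finset.sum_lt_sum_of_nonempty Finset.univ_nonempty fun s _ => ?_
  refine mul_lt_mul_of_pos_left ?_ (hw s)
  exact Real.rpow_lt_rpow (staticShare_pos (ha s) (hb s) hx).le
    (strictMonoOn_staticShare (ha s) (hb s) hp hx hy hxy) hα

lemma continuousOn_staticUtility (ha : ∀ s, 0 < a s) (hb : ∀ s, 0 < b s) :
    ContinuousOn (staticUtility p α w a b) (Ioi 0) :=
  continuousOn_finsetSum _ fun s _ => continuousOn_const.mul <|
    (continuousOn_staticShare (ha s) (hb s)).rpow_const fun _ hξ =>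
      Or.inl (staticShare_pos (ha s) (hb s) hξ).ne'

lemma tendsto_staticUtility_nhdsGT_zero (hb : ∀ s, 0 < b s) (hp : p < 0) (hα : 0 < α) :
    Tendsto (staticUtility p α w a b) (𝓝[>] 0) (𝓝 0) := by
  have h := tendsto_finsetSum Finset.univ fun s _ =>
    ((tendsto_staticShare_nhdsGT_zero (a := a s) (hb s) hp).rpow_const_nhds_zero hα).const_mul
      (w s)
  unfold staticUtility
  simpa using h

lemma tendsto_staticUtility_atTop (ha : ∀ s, 0 < a s) (hb : ∀ s, 0 < b s) (hp : p < 0) :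
    Tendsto (staticUtility p α w a b) atTop (𝓝 (∑ s, w s)) := by
  have h := tendsto_finsetSum Finset.univ fun s _ =>
    ((tendsto_staticShare_atTop (ha s) (hb s) hp).rpow_const
      (p := α) (Or.inl one_ne_zero)).const_mul (w s)
  unfold staticUtility
  simpa using h

end staticUtility

theorem static_alpha_utility_limits_and_unique_multiplier_general
    {S : Type*} [Fintype S] [Nonempty S]
    (g A B : S → ℝ)
    (hg : ∀ s : S, 0 < g s)
    (hA : ∀ s : S, 0 < A s) (hB : ∀ s : S, 0 < B s)
    (α : ℝ) (hα : α ∈ Set.Ioo (0 : ℝ) 1)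
    (η : ℝ → S → ℝ)
    (hη : ∀ ξ : ℝ, 0 < ξ → ∀ s : S,
      η ξ s = (ξ * B s) ^ (1 / (α - 1)) /
        ((ξ * B s) ^ (1 / (α - 1)) + (A s) ^ (1 / (α - 1))))
    (Rbar : ℝ → ℝ)
    (hR : ∀ ξ : ℝ, 0 < ξ → Rbar ξ = ∑ s : S, g s * B s * (1 - η ξ s) ^ α) :
    Filter.Tendsto Rbar (nhdsWithin 0 (Set.Ioi (0 : ℝ))) (nhds 0) ∧
    Filter.Tendsto Rbar Filter.atTop (nhds (∑ s : S, g s * B s)) ∧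
    (∀ R₀ : ℝ, 0 < R₀ → R₀ < ∑ s : S, g s * B s →
      ∃! ξ : ℝ, 0 < ξ ∧ Rbar ξ = R₀) := by
  obtain ⟨hα0, hα1⟩ := hα
  have hp : 1 / (α - 1) < 0 := one_div_neg.mpr (by linarith)
  have hRU : EqOn Rbar (staticUtility (1 / (α - 1)) α (fun s => g s * B s) A B) (Ioi 0) := by
    intro ξ hξ
    rw [hR ξ hξ]
    refine Finset.sum_congr rfl fun s _ => ?_
    rw [hη ξ hξ s, one_sub_div (staticShare_denom_pos (hA s) (hB s) hξ).ne',
      add_sub_cancel_left]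
    rfl
  have h0 : Tendsto Rbar (𝓝[>] 0) (𝓝 0) :=
    (tendsto_staticUtility_nhdsGT_zero hB hp hα0).congr'
      (eventuallyEq_nhdsWithin_of_eqOn hRU).symm
  have htop : Tendsto Rbar atTop (𝓝 (∑ s, g s * B s)) :=
    (tendsto_staticUtility_atTop hA hB hp).congr'
      (eventuallyEq_of_mem (Ioi_mem_atTop 0) hRU).symm
  have hmono : StrictMonoOn Rbar (Ioi 0) :=
    (strictMonoOn_staticUtility (fun s => mul_pos (hg s) (hB s)) hA hB hp hα0).congr hRU.symm
  exact ⟨h0, htop, fun R₀ hR₀ hR₀B => existsUnique_pos_eq_of_strictMonoOn_Ioi hmono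
    ((continuousOn_staticUtility hA hB).congr hRU) h0 htop hR₀ hR₀B⟩

/-- Feasibility claim of Section V: `R̄*(ξ) → 0` as `ξ → 0+`,
`R̄*(ξ) → Σ_s g(s)·B(s)` as `ξ → ∞`, and for every feasible constraint level
`R₀` there is a unique multiplier `ξ* > 0` with `R̄*(ξ*) = R₀`. -/
theorem static_alpha_utility_limits_and_unique_multiplier
    {S : Type*} [Fintype S] [Nonempty S]
    (g A B : S → ℝ)
    (hg : ∀ s : S, 0 < g s) (hsum : ∑ s : S, g s = 1)
    (hA : ∀ s : S, 0 < A s) (hB : ∀ s : S, 0 < B s)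
    (α : ℝ) (hα : α ∈ Set.Ioo (0 : ℝ) 1)
    (η : ℝ → S → ℝ)
    (hη : ∀ ξ : ℝ, 0 < ξ → ∀ s : S,
      η ξ s = (ξ * B s) ^ (1 / (α - 1)) /
        ((ξ * B s) ^ (1 / (α - 1)) + (A s) ^ (1 / (α - 1))))
    (Rbar : ℝ → ℝ)
    (hR : ∀ ξ : ℝ, 0 < ξ → Rbar ξ = ∑ s : S, g s * B s * (1 - η ξ s) ^ α) :
    Filter.Tendsto Rbar (nhdsWithin 0 (Set.Ioi (0 : ℝ))) (nhds 0) ∧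
    Filter.Tendsto Rbar Filter.atTop (nhds (∑ s : S, g s * B s)) ∧
    (∀ R₀ : ℝ, 0 < R₀ → R₀ < ∑ s : S, g s * B s →
      ∃! ξ : ℝ, 0 < ξ ∧ Rbar ξ = R₀) :=
  static_alpha_utility_limits_and_unique_multiplier_general g A B hg hA hB α hα η hη Rbar hR
end
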